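/- arXiv:2511.23343 — 3 statements merged into one kernel-verified Lean document; each statement's English description precedes it below -/
import Mathlib

section
/- Let ε > 0, let G ⊆ ℂ be open, and let h : 𝔻 → G be a bijective holomorphic map with h(0) = 0 such that |h(w) − w| ≤ 2ε log(1/(1−|w|)) for every w ∈ 𝔻 with |w| ≥ 1 − e^{−2}. Then for every r ∈ [1 − e^{−2}, 1), one has B(0, r − 2ε log(1/(1−r))) ⊆ h(B(0,r)) ⊆ B(0, r + 2ε log(1/(1−r))). -/
/-!
Since `h` is holomorphic and injective, the open mapping theorem makes `U = h(B(0,r))` open, and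
`U` is squeezed by the values of `h` on the circle `|w| = r`, where the displacement bound gives
`r - δ ≤ |h w| ≤ r + δ` with `δ = 2ε log(1/(1-r))`. The maximum modulus principle puts `U` inside
the closed disk of radius `r + δ`, hence inside its interior since `U` is open. Conversely
`closure U ⊆ h(closedBall 0 r)`, so boundary points of `U` lie in `h(sphere 0 r)` and have modulus
at least `r - δ`; the connected disk `B(0, r - δ)` contains `h 0 = 0 ∈ U` and no boundary point of
`U`, so it lies in `U`.
-/

open Metric Set

theorem AnalyticOnNhd.isOpen_image_of_injOn {E : Type*} [NormedAddCommGroup E] [NormedSpace ℂ E]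
    {g : E → ℂ} {U s : Set E} (hg : AnalyticOnNhd ℂ g U) (hU : IsPreconnected U)
    (hinj : InjOn g U) (hnt : U.Nontrivial) (hsU : s ⊆ U) (hs : IsOpen s) :
    IsOpen (g '' s) := by
  refine (hg.is_constant_or_isOpen hU).resolve_left ?_ s hsU hs
  rintro ⟨w, hw⟩
  obtain ⟨a, ha, b, hb, hab⟩ := hnt
  exact hab (hinj ha hb ((hw a ha).trans (hw b hb).symm))

theorem image_ball_subset_ball_of_sphere {E F : Type*} [NormedAddCommGroup E] [NormedSpace ℂ E]
    [Nontrivial E] [NormedAddCommGroup F] [NormedSpace ℂ F] [Nontrivial F] {f : E → F} {x : E}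
    {r R : ℝ} {c : F} (hf : DiffContOnCl ℂ f (ball x r)) (hopen : IsOpen (f '' ball x r))
    (hR : ∀ w ∈ sphere x r, dist (f w) c ≤ R) :
    f '' ball x r ⊆ ball c R := by
  have hclosed : f '' ball x r ⊆ closedBall c R := by
    rintro _ ⟨z, hz, rfl⟩
    rw [mem_closedBall, dist_eq_norm]
    exact Complex.norm_le_of_forall_mem_frontier_norm_le isBounded_ball (hf.sub_const c)
      (fun w hw => (dist_eq_norm (f w) c) ▸ hR w (frontier_ball_subset_sphere hw))
      (subset_closure hz)
  simpa only [interior_closedBall'] using interior_maximal hclosed hopen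

theorem ball_subset_image_ball_of_sphere {E F : Type*} [PseudoMetricSpace E] [ProperSpace E]
    [NormedAddCommGroup F] [NormedSpace ℝ F] {f : E → F} {x : E} {r R : ℝ} (hr : 0 < r)
    (hf : ContinuousOn f (closedBall x r)) (hopen : IsOpen (f '' ball x r))
    (hR : ∀ w ∈ sphere x r, R ≤ dist (f w) (f x)) :
    ball (f x) R ⊆ f '' ball x r := by
  rcases le_or_gt R 0 with hR0 | hR0
  · simp [ball_eq_empty.2 hR0]
  have hclosure : closure (f '' ball x r) ⊆ f '' closedBall x r :=
    closure_minimal (image_mono ball_subset_closedBall)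
      ((isCompact_closedBall x r).image_of_continuousOn hf).isClosed
  refine (convex_ball (f x) R).isPreconnected.subset_of_closure_inter_subset hopen
    ⟨f x, mem_ball_self hR0, mem_image_of_mem f (mem_ball_self hr)⟩ ?_
  rintro _ ⟨hy, hyR⟩
  obtain ⟨w, hw, rfl⟩ := hclosure hy
  rcases (mem_closedBall.1 hw).lt_or_eq with hlt | heq
  · exact mem_image_of_mem f hlt
  · exact absurd (hR w heq) (not_le.2 hyR)

theorem image_of_circle_trapped_between_circles_general
    (ε : ℝ)
    (h : ℂ → ℂ)
    (hdiff : DifferentiableOn ℂ h (ball (0 : ℂ) 1))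
    (hinj : Set.InjOn h (ball (0 : ℂ) 1))
    (h0 : h 0 = 0)
    (hdisp : ∀ w ∈ ball (0 : ℂ) 1, 1 - Real.exp (-2) ≤ ‖w‖ →
      ‖h w - w‖ ≤ 2 * ε * Real.log (1 / (1 - ‖w‖))) :
    ∀ r : ℝ, 1 - Real.exp (-2) ≤ r → r < 1 →
      ball (0 : ℂ) (r - 2 * ε * Real.log (1 / (1 - r))) ⊆ h '' ball (0 : ℂ) r ∧
      h '' ball (0 : ℂ) r ⊆ ball (0 : ℂ) (r + 2 * ε * Real.log (1 / (1 - r))) := by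
  intro r hr hr1
  have hr0 : 0 < r := (sub_pos.2 (Real.exp_lt_one_iff.2 (by norm_num))).trans_le hr
  have hclosedBall : closedBall (0 : ℂ) r ⊆ ball 0 1 := closedBall_subset_ball hr1
  have hopen : IsOpen (h '' ball 0 r) :=
    (hdiff.analyticOnNhd isOpen_ball).isOpen_image_of_injOn (convex_ball 0 1).isPreconnected
      hinj (infinite_of_mem_nhds 0 (ball_mem_nhds 0 one_pos)).nontrivial
      (ball_subset_ball hr1.le) isOpen_ball
  have hsphere : ∀ w ∈ sphere (0 : ℂ) r, ‖w‖ = r ∧ ‖h w - w‖ ≤ 2 * ε * Real.log (1 / (1 - r)) :=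
    fun w hw => by
      rw [mem_sphere_zero_iff_norm] at hw
      exact ⟨hw, hw ▸ hdisp w (hclosedBall (sphere_subset_closedBall (by simpa using hw)))
        (hw ▸ hr)⟩
  constructor
  · nth_rewrite 1 [← h0]
    refine ball_subset_image_ball_of_sphere hr0 (hdiff.continuousOn.mono hclosedBall) hopen
      fun w hw => ?_
    obtain ⟨hw, hdw⟩ := hsphere w hw
    rw [h0, dist_zero_right]
    linarith [norm_sub_norm_le w (h w), norm_sub_rev w (h w)]
  · refine image_ball_subset_ball_of_sphere
      ((hdiff.mono hclosedBall).diffContOnCl_ball le_rfl) hopen fun w hw => ?_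
    obtain ⟨hw, hdw⟩ := hsphere w hw
    rw [dist_zero_right]
    linarith [norm_sub_norm_le (h w) w]

/-- The intermediate inclusion in the proof of Lemma 2.8: if the conformal bijection
`h : 𝔻 → G` with `h(0) = 0` displaces points near the unit circle by at most
`2ε log(1/(1−|w|))`, then the image of each disk `B(0,r)` with `1 − e⁻² ≤ r < 1` is
trapped between the disks of radii `r ∓ 2ε log(1/(1−r))`. -/
theorem image_of_circle_trapped_between_circles
    (ε : ℝ) (hε : 0 < ε)
    (G : Set ℂ) (hG : IsOpen G)
    (h : ℂ → ℂ)
    (hdiff : DifferentiableOn ℂ h (ball (0 : ℂ) 1))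
    (hinj : Set.InjOn h (ball (0 : ℂ) 1))
    (him : h '' ball (0 : ℂ) 1 = G)
    (h0 : h 0 = 0)
    (hdisp : ∀ w ∈ ball (0 : ℂ) 1, 1 - Real.exp (-2) ≤ ‖w‖ →
      ‖h w - w‖ ≤ 2 * ε * Real.log (1 / (1 - ‖w‖))) :
    ∀ r : ℝ, 1 - Real.exp (-2) ≤ r → r < 1 →
      ball (0 : ℂ) (r - 2 * ε * Real.log (1 / (1 - r))) ⊆ h '' ball (0 : ℂ) r ∧
      h '' ball (0 : ℂ) r ⊆ ball (0 : ℂ) (r + 2 * ε * Real.log (1 / (1 - r))) :=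
  image_of_circle_trapped_between_circles_general ε h hdiff hinj h0 hdisp
end

section
/- For every α ∈ (0,1) there exists τ* > 0 with the following property: whenever (τ_k)_{k≥1} is a monotone increasing sequence of reals with τ₁ ≥ τ* that satisfies τ_{k+1}^{11} ≤ exp(τ_k^{α/7}) for all k ≥ 1 (condition C1) and log log(τ_k) ≤ (1/2) log log(τ_{k+1}) for all k ≥ 1 (condition C2), one has, for every k ≥ 1, (3^k/τ_k) · log²(τ_k) < 1/ log log(τ_{k+1}). -/
/-!
Monotonicity keeps every `τ_k` above `τ* = exp (exp 10)`. Condition C2 doubles `log log τ_k`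
at each step, so `log log τ_k ≥ 5 · 2^k`, whence `3^k ≤ 4^k ≤ (log τ_k)^2 / 25`; condition C1
gives `log τ_{k+1} ≤ τ_k`, i.e. `log log τ_{k+1} ≤ log τ_k`. With `L = log τ_k` the claim thus
reduces to `L^5 / 25 < exp L`, which holds because `exp L ≥ L^6 / 6!` and `L` is large.
-/

open Real

theorem two_pow_pred_mul_le_of_two_mul_le {u : ℕ → ℝ} (h : ∀ k, 1 ≤ k → 2 * u k ≤ u (k + 1)) :
    ∀ k, 1 ≤ k → 2 ^ (k - 1) * u 1 ≤ u k := by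
  refine Nat.le_induction (by simp) fun k hk ih => ?_
  calc 2 ^ (k + 1 - 1) * u 1 = 2 * (2 ^ (k - 1) * u 1) := by
        rw [← mul_assoc, ← pow_succ', Nat.sub_add_cancel hk, Nat.add_sub_cancel]
    _ ≤ 2 * u k := by gcongr
    _ ≤ u (k + 1) := h k hk

theorem log_le_of_pow_le_exp_rpow {x y a : ℝ} {n : ℕ} (hn : n ≠ 0) (hx : 1 ≤ x) (hy : 1 ≤ y)
    (ha : a ≤ 1) (h : y ^ n ≤ exp (x ^ a)) : log y ≤ x := by
  have hn' : (1 : ℝ) ≤ n := by exact_mod_cast Nat.one_le_iff_ne_zero.2 hn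
  calc log y ≤ n * log y := le_mul_of_one_le_left (log_nonneg hy) hn'
    _ = log (y ^ n) := (log_pow y n).symm
    _ ≤ log (exp (x ^ a)) := log_le_log (by positivity) h
    _ = x ^ a := log_exp _
    _ ≤ x := by simpa using rpow_le_rpow_of_exponent_le hx ha

theorem three_pow_mul_pow_three_lt_exp {k : ℕ} {L : ℝ} (hL : 0 < L) (h : 5 * 2 ^ k ≤ log L) :
    3 ^ k * L ^ 3 < exp L := by
  have h5 : 5 ≤ log L := le_trans (by simpa using one_le_pow₀ (M₀ := ℝ) (n := k) one_le_two) h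
  -- `L ^ 5 / 25 < L ^ 6 / 6!` as soon as `L > 28.8`.
  have h29 : (29 : ℝ) < exp 5 := by
    rw [show (5 : ℝ) = (5 : ℕ) * 1 by norm_num, exp_nat_mul]
    calc (29 : ℝ) < 2.7 ^ 5 := by norm_num
      _ ≤ exp 1 ^ 5 := by gcongr; linarith [exp_one_gt_d9]
  have hL29 : 29 < L := h29.trans_le ((le_log_iff_exp_le hL).1 h5)
  have h3 : (3 : ℝ) ^ k ≤ L ^ 2 / 25 :=
    calc (3 : ℝ) ^ k ≤ 4 ^ k := pow_le_pow_left₀ (by norm_num) (by norm_num) k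
      _ = (2 ^ k) ^ 2 := by rw [← pow_mul, mul_comm, pow_mul]; norm_num
      _ ≤ (log L / 5) ^ 2 := by gcongr; linarith
      _ ≤ (L / 5) ^ 2 := by gcongr; exact log_le_self hL.le
      _ = L ^ 2 / 25 := by ring
  calc 3 ^ k * L ^ 3 ≤ L ^ 2 / 25 * L ^ 3 := by gcongr
    _ < L ^ 6 / 720 := by nlinarith [pow_pos hL 5]
    _ ≤ exp L := by simpa [Nat.factorial] using pow_div_factorial_le_exp _ hL.le 6

theorem div_mul_sq_lt_one_div {a τ L M : ℝ} (ha : 0 ≤ a) (hM : 0 < M) (hML : M ≤ L)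
    (h : a * L ^ 3 < τ) : a / τ * L ^ 2 < 1 / M := by
  have hτ : 0 < τ := lt_of_le_of_lt (by have := hM.trans_le hML; positivity) h
  rw [div_mul_eq_mul_div, div_lt_div_iff₀ hτ hM, one_mul]
  calc a * L ^ 2 * M ≤ a * L ^ 2 * L := by gcongr
    _ = a * L ^ 3 := by ring
    _ < τ := h

/-- **Proposition 4.1(b).** For every `α ∈ (0,1)` there is `τ* > 0` such that every
monotone increasing sequence `(τ_k)_{k≥1}` with `τ₁ ≥ τ*` satisfying
(C1) `τ_{k+1}^{11} ≤ exp(τ_k^{α/7})` and (C2) `log log τ_k ≤ (1/2) log log τ_{k+1}`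
for all `k ≥ 1`, also satisfies `(3^k/τ_k)·log²(τ_k) < 1/log log(τ_{k+1})` for all
`k ≥ 1`. -/
theorem three_pow_over_tau_lt_rho
    (α : ℝ) (hα : α ∈ Set.Ioo (0 : ℝ) 1) :
    ∃ τstar : ℝ, 0 < τstar ∧
      ∀ τ : ℕ → ℝ, (∀ k, 1 ≤ k → τ k ≤ τ (k + 1)) → τstar ≤ τ 1 →
        (∀ k, 1 ≤ k → (τ (k + 1)) ^ (11 : ℕ) ≤ Real.exp ((τ k) ^ (α / 7))) →
        (∀ k, 1 ≤ k →
          Real.log (Real.log (τ k)) ≤ (1 / 2) * Real.log (Real.log (τ (k + 1)))) →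
        ∀ k, 1 ≤ k →
          ((3 : ℝ) ^ k / τ k) * (Real.log (τ k)) ^ 2 <
            1 / Real.log (Real.log (τ (k + 1))) := by
  refine ⟨exp (exp 10), exp_pos _, fun τ hmono hτ1 hC1 hC2 k hk => ?_⟩
  have hτ : ∀ m, 1 ≤ m → exp (exp 10) ≤ τ m := fun m hm =>
    hτ1.trans (monotoneOn_nat_Ici_of_le_succ hmono (Set.mem_Ici.2 le_rfl) hm hm)
  have hτpos : ∀ m, 1 ≤ m → 0 < τ m := fun m hm => (exp_pos _).trans_le (hτ m hm)
  have hlog : ∀ m, 1 ≤ m → exp 10 ≤ log (τ m) := fun m hm =>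
    (le_log_iff_exp_le (hτpos m hm)).2 (hτ m hm)
  have hloglog : ∀ m, 1 ≤ m → 10 ≤ log (log (τ m)) := fun m hm =>
    (le_log_iff_exp_le ((exp_pos _).trans_le (hlog m hm))).2 (hlog m hm)
  have hgrowth : 5 * 2 ^ k ≤ log (log (τ k)) := by
    obtain ⟨j, rfl⟩ := Nat.exists_eq_add_of_le' hk
    calc (5 : ℝ) * 2 ^ (j + 1) = 2 ^ (j + 1 - 1) * 10 := by rw [Nat.add_sub_cancel, pow_succ]; ring
      _ ≤ 2 ^ (j + 1 - 1) * log (log (τ 1)) := by gcongr; exact hloglog 1 le_rfl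
      _ ≤ log (log (τ (j + 1))) := two_pow_pred_mul_le_of_two_mul_le
          (u := fun m => log (log (τ m))) (fun m hm => by linarith [hC2 m hm]) _ hk
  have hone : ∀ m, 1 ≤ m → 1 ≤ τ m := fun m hm => (one_le_exp (exp_pos _).le).trans (hτ m hm)
  have hloglog_succ_le : log (log (τ (k + 1))) ≤ log (τ k) :=
    log_le_log ((exp_pos _).trans_le (hlog _ (by omega))) <|
      log_le_of_pow_le_exp_rpow (by norm_num) (hone k hk) (hone _ (by omega))
        (by linarith [hα.2]) (hC1 k hk)
  have hkey := three_pow_mul_pow_three_lt_exp ((exp_pos _).trans_le (hlog k hk)) hgrowth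
  rw [exp_log (hτpos k hk)] at hkey
  exact div_mul_sq_lt_one_div (by positivity) (by linarith [hloglog (k + 1) (by omega)]) hloglog_succ_le hkey
end

section
/- Let η ∈ (0,1/4] and let u₁ : ℂ → ℝ be subharmonic with u₁(z) = e^{|z|/η} whenever |z| ≥ 1 + 7η/5. Define u : ℂ → ℝ by u(z) = u₁(z) for |z| < 1+2η; u(z) = max( u₁(z), (2e³/η)·e^{1/η}·log(|z|/(1+2η)) ) for 1+2η ≤ |z| ≤ 1+3η; and u(z) = (2e³/η)·e^{1/η}·log(|z|/(1+2η)) for |z| > 1+3η. Then u is subharmonic on ℂ. -/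
/-!
Subharmonicity is local, and the glued function is locally one of three subharmonic functions.
The logarithmic weight is harmonic off the origin and vanishes on `|z| = 1 + 2η`, so just outside
that circle it stays below `u₁ = e^{|z|/η}` and the glued function is `u₁`. Its constant
`2e³e^{1/η}/η` makes it exceed `e^{|z|/η}` just outside `|z| = 1 + 3η`, where the glued function
is therefore the logarithmic weight. In between, the glued function is the maximum of `u₁` and
the logarithmic weight, both continuous there.
-/

open Metric
open scoped Classical

/-- A function `u : ℂ → ℝ` is subharmonic on an open set `Ω` if it is upper semicontinuous
on `Ω` and satisfies the sub-mean value inequality on small circles around each point. -/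
def SubharmonicOn (u : ℂ → ℝ) (Ω : Set ℂ) : Prop :=
  UpperSemicontinuousOn u Ω ∧
  ∀ z ∈ Ω, ∃ r₀ : ℝ, 0 < r₀ ∧ ∀ r : ℝ, 0 < r → r < r₀ → closedBall z r ⊆ Ω →
    u z ≤ (1 / (2 * Real.pi)) *
      ∫ θ in (0 : ℝ)..(2 * Real.pi), u (z + (r : ℂ) * Complex.exp ((θ : ℂ) * Complex.I))

open Real InnerProductSpace

theorem subharmonicOn_iff_circleAverage {u : ℂ → ℝ} {Ω : Set ℂ} :
    SubharmonicOn u Ω ↔ UpperSemicontinuousOn u Ω ∧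
      ∀ z ∈ Ω, ∃ r₀ : ℝ, 0 < r₀ ∧ ∀ r : ℝ, 0 < r → r < r₀ → closedBall z r ⊆ Ω →
        u z ≤ circleAverage u z r := by
  simp only [SubharmonicOn, circleAverage_def, smul_eq_mul, one_div]
  rfl

theorem SubharmonicOn.mono {u : ℂ → ℝ} {Ω Ω' : Set ℂ} (hu : SubharmonicOn u Ω)
    (hΩ : Ω' ⊆ Ω) : SubharmonicOn u Ω' := by
  rw [subharmonicOn_iff_circleAverage] at hu ⊢
  refine ⟨hu.1.mono hΩ, fun z hz => ?_⟩
  obtain ⟨r₀, hr₀, hmean⟩ := hu.2 z (hΩ hz)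
  exact ⟨r₀, hr₀, fun r hr hrr₀ hball => hmean r hr hrr₀ (hball.trans hΩ)⟩

theorem subharmonicOn_of_locally_eqOn {w : ℂ → ℝ} {Ω : Set ℂ}
    (h : ∀ z ∈ Ω, ∃ U : Set ℂ, ∃ v : ℂ → ℝ,
      IsOpen U ∧ z ∈ U ∧ SubharmonicOn v U ∧ Set.EqOn w v U) :
    SubharmonicOn w Ω := by
  rw [subharmonicOn_iff_circleAverage]
  constructor
  · intro z hz y hy
    obtain ⟨U, v, hU, hzU, hv, hwv⟩ := h z hz
    have hv_usc := (subharmonicOn_iff_circleAverage.mp hv).1 z hzU y (by rwa [hwv hzU] at hy)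
    rw [nhdsWithin_eq_nhds.mpr (hU.mem_nhds hzU)] at hv_usc
    refine nhdsWithin_le_nhds ?_
    filter_upwards [hv_usc, hU.mem_nhds hzU] with x hx hxU
    rwa [hwv hxU]
  · intro z hz
    obtain ⟨U, v, hU, hzU, hv, hwv⟩ := h z hz
    obtain ⟨ε, hε, hball⟩ := Metric.isOpen_iff.mp hU z hzU
    obtain ⟨r₀, hr₀, hmean⟩ := (subharmonicOn_iff_circleAverage.mp hv).2 z hzU
    refine ⟨min r₀ ε, lt_min hr₀ hε, fun r hr hrlt _ => ?_⟩
    have hrU : closedBall z r ⊆ U :=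
      (closedBall_subset_ball (hrlt.trans_le (min_le_right _ _))).trans hball
    rw [hwv hzU, circleAverage_congr_sphere (fun x hx => hwv (hrU (sphere_subset_closedBall ?_)))]
    · exact hmean r hr (hrlt.trans_le (min_le_left _ _)) hrU
    · rwa [abs_of_pos hr] at hx

theorem SubharmonicOn.sup {u v : ℂ → ℝ} {Ω : Set ℂ} (hu : SubharmonicOn u Ω)
    (hv : SubharmonicOn v Ω) (hu_cont : ContinuousOn u Ω) (hv_cont : ContinuousOn v Ω) :
    SubharmonicOn (u ⊔ v) Ω := by
  rw [subharmonicOn_iff_circleAverage] at hu hv ⊢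
  refine ⟨(hu_cont.sup' hv_cont).upperSemicontinuousOn, fun z hz => ?_⟩
  obtain ⟨r₁, hr₁, hmean_u⟩ := hu.2 z hz
  obtain ⟨r₂, hr₂, hmean_v⟩ := hv.2 z hz
  refine ⟨min r₁ r₂, lt_min hr₁ hr₂, fun r hr hrlt hball => ?_⟩
  have hsphere : sphere z |r| ⊆ Ω := by
    rw [abs_of_pos hr]; exact sphere_subset_closedBall.trans hball
  have hu_int : CircleIntegrable u z r := (hu_cont.mono hsphere).circleIntegrable'
  have hv_int : CircleIntegrable v z r := (hv_cont.mono hsphere).circleIntegrable'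
  have hsup_int : CircleIntegrable (u ⊔ v) z r :=
    ((hu_cont.sup' hv_cont).mono hsphere).circleIntegrable'
  apply max_le
  · calc u z ≤ circleAverage u z r := hmean_u r hr (hrlt.trans_le (min_le_left _ _)) hball
      _ ≤ _ := circleAverage_mono hu_int hsup_int fun x _ => le_max_left _ _
  · calc v z ≤ circleAverage v z r := hmean_v r hr (hrlt.trans_le (min_le_right _ _)) hball
      _ ≤ _ := circleAverage_mono hv_int hsup_int fun x _ => le_max_right _ _

theorem InnerProductSpace.HarmonicOnNhd.subharmonicOn {f : ℂ → ℝ} {U : Set ℂ}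
    (hf : HarmonicOnNhd f U) : SubharmonicOn f U := by
  rw [subharmonicOn_iff_circleAverage]
  refine ⟨hf.continuousOn.upperSemicontinuousOn, fun z _ => ⟨1, one_pos, fun r hr _ hball => ?_⟩⟩
  rw [(hf.mono (by rwa [abs_of_pos hr])).circleAverage_eq]

theorem harmonicOnNhd_const_mul_log_norm_div (K : ℝ) {a : ℝ} (ha : a ≠ 0) :
    HarmonicOnNhd (fun w : ℂ => K * log (‖w‖ / a)) {0}ᶜ := by
  intro z hz
  have hlog : HarmonicAt (fun w : ℂ => log ‖(a⁻¹ : ℂ) * w‖) z :=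
    (analyticAt_const.mul analyticAt_id).harmonicAt_log_norm
      (mul_ne_zero (inv_ne_zero (Complex.ofReal_ne_zero.mpr ha)) hz)
  -- `Real.log` ignores signs, so `log (‖w‖ / a) = log ‖a⁻¹ w‖` also for `a < 0`.
  convert hlog.const_smul (c := K) using 1
  ext w
  rw [Pi.smul_apply, smul_eq_mul, ← log_abs, norm_mul, norm_inv, Complex.norm_real,
    Real.norm_eq_abs, abs_div, abs_norm, div_eq_inv_mul]

noncomputable def logWeight (η : ℝ) (z : ℂ) : ℝ :=
  2 * exp 3 / η * exp (1 / η) * log (‖z‖ / (1 + 2 * η))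

noncomputable def gluedWeight (η : ℝ) (u₁ : ℂ → ℝ) (z : ℂ) : ℝ :=
  if ‖z‖ < 1 + 2 * η then u₁ z
  else if ‖z‖ ≤ 1 + 3 * η then max (u₁ z) (logWeight η z)
  else logWeight η z

section Weights

variable {η : ℝ} {z : ℂ}

theorem logWeight_le_exp (hη : 0 < η) (h₁ : 1 + 2 * η ≤ ‖z‖) (h₂ : ‖z‖ ≤ 1 + 2 * η + η / 6) :
    logWeight η z ≤ exp (‖z‖ / η) := by
  have ha : (0 : ℝ) < 1 + 2 * η := by linarith
  have hlog : log (‖z‖ / (1 + 2 * η)) ≤ η / 6 := by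
    refine (log_le_sub_one_of_pos (div_pos (by linarith) ha)).trans ?_
    rw [div_sub_one ha.ne', div_le_iff₀ ha]
    nlinarith
  have hexp3 : exp 3 = exp 1 * exp 2 := by rw [← exp_add]; norm_num
  have hexp : exp ((1 + 2 * η) / η) = exp (1 / η) * exp 2 := by
    rw [← exp_add]; congr 1; field_simp
  calc logWeight η z ≤ 2 * exp 3 / η * exp (1 / η) * (η / 6) := by
        unfold logWeight; gcongr
    _ = exp 1 / 3 * exp ((1 + 2 * η) / η) := by
        rw [hexp3, hexp]; field_simp; ring
    _ ≤ 1 * exp ((1 + 2 * η) / η) := by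
        gcongr; linarith [exp_one_lt_d9]
    _ ≤ exp (‖z‖ / η) := by
        rw [one_mul]; gcongr

theorem exp_le_logWeight (hη : 0 < η) (hη' : η ≤ 1 / 4) (h₁ : 1 + 3 * η ≤ ‖z‖)
    (h₂ : ‖z‖ ≤ 1 + 3 * η + η / 8) :
    exp (‖z‖ / η) ≤ logWeight η z := by
  have hexp : exp (1 / 8 : ℝ) ≤ 8 / 7 := by
    refine (exp_bound_div_one_sub_of_interval (by norm_num) (by norm_num)).trans ?_
    norm_num
  calc exp (‖z‖ / η) ≤ exp (1 / η + 3 + 1 / 8) := by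
        gcongr
        rw [div_le_iff₀ hη]
        field_simp
        linarith
    _ = exp (1 / η) * exp 3 * exp (1 / 8) := by rw [exp_add, exp_add]
    _ ≤ exp (1 / η) * exp 3 * (2 / (1 + 3 * η)) := by
        gcongr
        refine hexp.trans ?_
        rw [le_div_iff₀ (by linarith)]
        linarith
    _ = 2 * exp 3 / η * exp (1 / η) * (1 - ((1 + 3 * η) / (1 + 2 * η))⁻¹) := by
        field_simp
        ring
    _ ≤ 2 * exp 3 / η * exp (1 / η) * log ((1 + 3 * η) / (1 + 2 * η)) := by
        gcongr
        exact one_sub_inv_le_log_of_pos (by positivity)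
    _ ≤ logWeight η z := by
        unfold logWeight
        gcongr

end Weights

section Gluing

variable {η : ℝ} {u₁ : ℂ → ℝ} {z : ℂ}

theorem gluedWeight_eq_of_norm_lt (hη : 0 < η)
    (hu₁ : ∀ z : ℂ, 1 + 7 * η / 5 ≤ ‖z‖ → u₁ z = exp (‖z‖ / η))
    (hz : ‖z‖ < 1 + 2 * η + η / 6) : gluedWeight η u₁ z = u₁ z := by
  unfold gluedWeight
  split_ifs with h₁ h₂
  · rfl
  · rw [max_eq_left]
    rw [hu₁ z (by linarith)]
    exact logWeight_le_exp hη (not_lt.mp h₁) hz.le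
  · linarith

theorem gluedWeight_eq_sup (hη : 0 < η) (hη' : η ≤ 1 / 4)
    (hu₁ : ∀ z : ℂ, 1 + 7 * η / 5 ≤ ‖z‖ → u₁ z = exp (‖z‖ / η))
    (h₁ : 1 + 2 * η < ‖z‖) (h₂ : ‖z‖ < 1 + 3 * η + η / 8) :
    gluedWeight η u₁ z = (u₁ ⊔ logWeight η) z := by
  unfold gluedWeight
  split_ifs with h₁' h₂'
  · linarith
  · rfl
  · rw [Pi.sup_apply, right_eq_sup, hu₁ z (by linarith)]
    exact exp_le_logWeight hη hη' (not_le.mp h₂').le h₂.le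

theorem gluedWeight_eq_logWeight (hη : 0 < η) (hz : 1 + 3 * η < ‖z‖) :
    gluedWeight η u₁ z = logWeight η z := by
  unfold gluedWeight
  rw [if_neg (by linarith), if_neg (by linarith)]

end Gluing

/-- The gluing step in the construction of the subharmonic weight in the proof of
Lemma 3.1: the exponential weight `u₁` (equal to `e^{|z|/η}` for `|z| ≥ 1 + 7η/5`) glued
with the logarithmic weight `(2e³/η)e^{1/η} log(|z|/(1+2η))` across the annulus
`1+2η ≤ |z| ≤ 1+3η` is subharmonic on `ℂ`. -/
theorem glued_weight_subharmonic
    (η : ℝ) (hη : η ∈ Set.Ioc (0 : ℝ) (1 / 4))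
    (u₁ : ℂ → ℝ) (hsub : SubharmonicOn u₁ Set.univ)
    (hu₁ : ∀ z : ℂ, 1 + 7 * η / 5 ≤ ‖z‖ →
      u₁ z = Real.exp (‖z‖ / η)) :
    SubharmonicOn
      (fun z =>
        if ‖z‖ < 1 + 2 * η then u₁ z
        else if ‖z‖ ≤ 1 + 3 * η then
          max (u₁ z)
            ((2 * Real.exp 3 / η) * Real.exp (1 / η) *
              Real.log (‖z‖ / (1 + 2 * η)))
        else
          (2 * Real.exp 3 / η) * Real.exp (1 / η) *
            Real.log (‖z‖ / (1 + 2 * η)))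
      Set.univ := by
  obtain ⟨hη, hη'⟩ := hη
  have hlog : HarmonicOnNhd (logWeight η) {0}ᶜ :=
    harmonicOnNhd_const_mul_log_norm_div _ (by positivity)
  change SubharmonicOn (gluedWeight η u₁) Set.univ
  refine subharmonicOn_of_locally_eqOn fun z _ => ?_
  rcases lt_or_ge ‖z‖ (1 + 2 * η + η / 6) with hz | hz
  · exact ⟨{w | ‖w‖ < 1 + 2 * η + η / 6}, u₁, isOpen_lt continuous_norm continuous_const, hz,
      hsub.mono (Set.subset_univ _), fun w => gluedWeight_eq_of_norm_lt hη hu₁⟩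
  rcases lt_or_ge ‖z‖ (1 + 3 * η + η / 8) with hz' | hz'
  · set A := {w : ℂ | 1 + 2 * η < ‖w‖ ∧ ‖w‖ < 1 + 3 * η + η / 8}
    have hA_open : IsOpen A :=
      (isOpen_lt continuous_const continuous_norm).inter
        (isOpen_lt continuous_norm continuous_const)
    have hA : A ⊆ {0}ᶜ := fun w hw => norm_pos_iff.mp (by linarith [hw.1])
    have hu₁_cont : ContinuousOn u₁ A :=
      (continuous_exp.comp (continuous_norm.div_const η)).continuousOn.congr
        fun w hw => hu₁ w (by linarith [hw.1])
    have hsup : SubharmonicOn (u₁ ⊔ logWeight η) A :=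
      (hsub.mono (Set.subset_univ _)).sup (hlog.mono hA).subharmonicOn hu₁_cont
        (hlog.continuousOn.mono hA)
    exact ⟨A, u₁ ⊔ logWeight η, hA_open, ⟨by linarith, hz'⟩, hsup,
      fun w hw => gluedWeight_eq_sup hη hη' hu₁ hw.1 hw.2⟩
  · set B := {w : ℂ | 1 + 3 * η < ‖w‖}
    have hB : B ⊆ {0}ᶜ := fun w (hw : 1 + 3 * η < ‖w‖) => norm_pos_iff.mp (by linarith)
    exact ⟨B, logWeight η, isOpen_lt continuous_const continuous_norm,
      show 1 + 3 * η < ‖z‖ by linarith, (hlog.mono hB).subharmonicOn,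
      fun w => gluedWeight_eq_logWeight hη⟩
end
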